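/- DHT satisfaction is persistent from 'here' to 'there': for any HT-trace ⟨H,T⟩ of length λ, any dynamic formula φ, and any k < λ, if ⟨H,T⟩,k ⊨ φ in DHT, then ⟨T,T⟩,k ⊨ φ (equivalently, T,k ⊨ φ in LDL). -/
import Mathlib


namespace LDL

mutual
inductive Formula (α : Type) : Type where
  | atom : α → Formula α
  | bot : Formula α
  | top : Formula α
  | dia : Path α → Formula α → Formula α
  | box : Path α → Formula α → Formula α

inductive Path (α : Type) : Type where
  | tau : Path α
  | test : Formula α → Path α
  | plus : Path α → Path α → Path α
  | seq : Path α → Path α → Path α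
  | star : Path α → Path α
end

/-- n-fold iteration of a relation, with the 0-fold case restricted to points `< lam`. -/
def iterRel (r : ℕ → ℕ → Prop) (lam : ℕ) : ℕ → ℕ → ℕ → Prop
  | 0, k, i => k = i ∧ k < lam
  | n+1, k, i => ∃ j, r k j ∧ iterRel r lam n j i

mutual
/-- LDL_f satisfaction over a finite trace `T` of length `lam`. -/
def Sat (T : ℕ → Set α) (lam : ℕ) (φ : Formula α) (k : ℕ) : Prop :=
  match φ with
  | .atom a => a ∈ T k
  | .bot => False
  | .top => True
  | .dia ρ ψ => ∃ i, Rel T lam ρ k i ∧ Sat T lam ψ i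
  | .box ρ ψ => ∀ i, Rel T lam ρ k i → Sat T lam ψ i

/-- Accessibility relation of a path expression over trace `T` of length `lam`. -/
def Rel (T : ℕ → Set α) (lam : ℕ) (ρ : Path α) (k i : ℕ) : Prop :=
  match ρ with
  | .tau => i = k + 1 ∧ k + 1 < lam
  | .test φ => i = k ∧ Sat T lam φ k
  | .plus ρ₁ ρ₂ => Rel T lam ρ₁ k i ∨ Rel T lam ρ₂ k i
  | .seq ρ₁ ρ₂ => ∃ j, Rel T lam ρ₁ k j ∧ Rel T lam ρ₂ j i
  | .star ρ => ∃ n, iterRel (Rel T lam ρ) lam n k i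
end


mutual
/-- DHT satisfaction over HT-traces `⟨H,T⟩` of length `lam`. -/
def SatHT (H T : ℕ → Set α) (lam : ℕ) (φ : Formula α) (k : ℕ) : Prop :=
  match φ with
  | .atom a => a ∈ H k
  | .bot => False
  | .top => True
  | .dia ρ ψ => ∃ i, RelHT H T lam ρ k i ∧ SatHT H T lam ψ i
  | .box ρ ψ =>
      (∀ i, RelHT H T lam ρ k i → SatHT H T lam ψ i) ∧
      (∀ i, RelHT T T lam ρ k i → SatHT T T lam ψ i)

/-- DHT accessibility relation over HT-traces. -/
def RelHT (H T : ℕ → Set α) (lam : ℕ) (ρ : Path α) (k i : ℕ) : Prop :=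
  match ρ with
  | .tau => i = k + 1 ∧ k + 1 < lam
  | .test φ => i = k ∧ SatHT H T lam φ k
  | .plus ρ₁ ρ₂ => RelHT H T lam ρ₁ k i ∨ RelHT H T lam ρ₂ k i
  | .seq ρ₁ ρ₂ => ∃ j, RelHT H T lam ρ₁ k j ∧ RelHT H T lam ρ₂ j i
  | .star ρ => ∃ n, iterRel (RelHT H T lam ρ) lam n k i
end

/-- Negation, defined as `¬φ := [φ?]⊥`. -/
def Formula.neg (φ : Formula α) : Formula α := .box (.test φ) .bot

mutual

theorem sat_pers {α : Type} (H T : ℕ → Set α) (lam : ℕ)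
    (hHT : ∀ i, i < lam → H i ⊆ T i) (φ : Formula α) :
    ∀ k, k < lam → SatHT H T lam φ k → SatHT T T lam φ k := by
  match φ with
  | .atom a => intro k hk h; exact hHT k hk h
  | .bot => intro k _ h; exact h
  | .top => intro _ _ _; trivial
  | .dia ρ ψ =>
      intro k hk h
      obtain ⟨i, hrel, hsat⟩ := h
      obtain ⟨hrel', hi⟩ := rel_pers H T lam hHT ρ k i hk hrel
      exact ⟨i, hrel', sat_pers H T lam hHT ψ i hi hsat⟩
  | .box ρ ψ =>
      intro k _ h
      exact ⟨h.2, h.2⟩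

theorem rel_pers {α : Type} (H T : ℕ → Set α) (lam : ℕ)
    (hHT : ∀ i, i < lam → H i ⊆ T i) (ρ : Path α) :
    ∀ k i, k < lam → RelHT H T lam ρ k i → RelHT T T lam ρ k i ∧ i < lam := by
  match ρ with
  | .tau => intro k i _ h; exact ⟨h, h.1 ▸ h.2⟩
  | .test φ =>
      intro k i hk h
      exact ⟨⟨h.1, sat_pers H T lam hHT φ k hk h.2⟩, h.1 ▸ hk⟩
  | .plus ρ₁ ρ₂ =>
      intro k i hk h
      cases h with
      | inl h =>
          obtain ⟨h', hi⟩ := rel_pers H T lam hHT ρ₁ k i hk h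
          exact ⟨Or.inl h', hi⟩
      | inr h =>
          obtain ⟨h', hi⟩ := rel_pers H T lam hHT ρ₂ k i hk h
          exact ⟨Or.inr h', hi⟩
  | .seq ρ₁ ρ₂ =>
      intro k i hk h
      obtain ⟨j, h₁, h₂⟩ := h
      obtain ⟨h₁', hj⟩ := rel_pers H T lam hHT ρ₁ k j hk h₁
      obtain ⟨h₂', hi⟩ := rel_pers H T lam hHT ρ₂ j i hj h₂
      exact ⟨⟨j, h₁', h₂'⟩, hi⟩
  | .star ρ =>
      intro k i hk h
      obtain ⟨n, hn⟩ := h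
      suffices h : ∀ n k, k < lam → iterRel (RelHT H T lam ρ) lam n k i →
          iterRel (RelHT T T lam ρ) lam n k i ∧ i < lam by
        obtain ⟨h', hi⟩ := h n k hk hn
        exact ⟨⟨n, h'⟩, hi⟩
      intro n
      induction n with
      | zero => intro k hk h; exact ⟨h, h.1 ▸ hk⟩
      | succ n ih =>
          intro k hk h
          obtain ⟨j, h₁, h₂⟩ := h
          obtain ⟨h₁', hj⟩ := rel_pers H T lam hHT ρ k j hk h₁
          obtain ⟨h₂', hi⟩ := ih j hj h₂
          exact ⟨⟨j, h₁', h₂'⟩, hi⟩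

end

/-- Persistence: DHT satisfaction on `⟨H,T⟩` implies satisfaction on the total trace
`⟨T,T⟩` (equivalently, LDL satisfaction on `T`). -/
theorem dht_persistence {α : Type} (H T : ℕ → Set α) (lam : ℕ)
    (hHT : ∀ i, i < lam → H i ⊆ T i) (φ : Formula α) (k : ℕ) (hk : k < lam)
    (h : SatHT H T lam φ k) : SatHT T T lam φ k :=
  sat_pers H T lam hHT φ k hk h

end LDL
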